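/- (Complex arcsine law.) Let G1, G2, G3, G4 be i.i.d. real standard normal random variables, let r, s ∈ ℝ with r² + s² ≤ 1, and set U1 = G1, U2 = G2, V1 = r G1 + s G2 + √(1 − r² − s²) G3, V2 = −s G1 + r G2 + √(1 − r² − s²) G4. Then E[ (sgn(U1) + j·sgn(U2)) · (sgn(V1) − j·sgn(V2)) ] = (4/π) ( arcsin(r) + j·arcsin(s) ). (Equivalently: for the unit-variance circularly symmetric complex Gaussian pair X = (U1 + j U2)/√2, Y = (V1 + j V2)/√2, which satisfies E[X conj(Y)] = r + js, the 1-bit quantized correlation E[(sgn(Re X)+j sgn(Im X))(sgn(Re Y) − j sgn(Im Y))] equals (4/π)(arcsin(r) + j arcsin(s)).) -/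

import Mathlib

/-!
The complex correlation splits into four real correlations `E[sgn X · sgn (ρ X + a Y + b Z)]`
with `X, Y, Z` independent standard normal and `ρ² + a² + b² = 1`. Since `a Y + b Z` is
`N(0, 1 - ρ²)` and independent of `X`, each one is Sheppard's arcsine law
`E[sgn X · sgn (ρ X + √(1 - ρ²) Y)] = (2/π) arcsin ρ`. In polar coordinates the standard Gaussian
on `ℝ²` has uniformly distributed angle, and `ρ cos θ + √(1 - ρ²) sin θ = sin (θ + arcsin ρ)`, so
the law reduces to `∫_{-π}^{π} sgn (cos θ) sgn (sin (θ + α)) dθ = 4α` for `|α| ≤ π/2`.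
-/

open MeasureTheory ProbabilityTheory Real Set

@[fun_prop]
lemma Real.measurable_sign : Measurable Real.sign :=
  Measurable.ite measurableSet_Iio measurable_const <|
    Measurable.ite measurableSet_Ioi measurable_const measurable_const

lemma Real.abs_sign_le_one (x : ℝ) : |sign x| ≤ 1 := by
  rcases sign_apply_eq x with h | h | h <;> simp [h]

lemma Real.sign_mul_of_pos {r : ℝ} (hr : 0 < r) (x : ℝ) : sign (r * x) = sign x := by
  rcases lt_trichotomy x 0 with hx | rfl | hx
  · rw [sign_of_neg hx, sign_of_neg (mul_neg_of_pos_of_neg hr hx)]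
  · simp
  · rw [sign_of_pos hx, sign_of_pos (mul_pos hr hx)]

section Integrability

variable {Ω : Type*} [MeasurableSpace Ω] {μ : Measure Ω} [IsFiniteMeasure μ]

lemma integrable_sign_comp {f : Ω → ℝ} (hf : Measurable f) : Integrable (fun ω => sign (f ω)) μ :=
  .of_bound (measurable_sign.comp hf).aestronglyMeasurable 1
    (ae_of_all _ fun ω => by simpa using abs_sign_le_one (f ω))

lemma integrable_sign_mul_sign {f g : Ω → ℝ} (hf : Measurable f) (hg : Measurable g) :
    Integrable (fun ω => sign (f ω) * sign (g ω)) μ :=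
  (integrable_sign_comp hg).bdd_mul (measurable_sign.comp hf).aestronglyMeasurable
    (ae_of_all _ fun ω => by simpa using abs_sign_le_one (f ω))

end Integrability

lemma intervalIntegral.integral_eq_sub_mul_of_eqOn_Ioo {f : ℝ → ℝ} {a b C : ℝ} (hab : a ≤ b)
    (hf : EqOn f (fun _ => C) (Ioo a b)) : ∫ x in a..b, f x = (b - a) * C := by
  rw [intervalIntegral.integral_congr_Ioo_of_le hab hf, intervalIntegral.integral_const,
    smul_eq_mul]

lemma integral_sign_sin {α : ℝ} (hα : |α| ≤ π / 2) :
    ∫ t in (α - π / 2)..(α + π / 2), sign (sin t) = 2 * α := by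
  obtain ⟨hα₁, hα₂⟩ := abs_le.mp hα
  have hneg : ∫ t in (α - π / 2)..0, sign (sin t) = (0 - (α - π / 2)) * (-1) :=
    intervalIntegral.integral_eq_sub_mul_of_eqOn_Ioo (by linarith) fun t ⟨_, ht⟩ =>
      sign_of_neg (sin_neg_of_neg_of_neg_pi_lt ht (by linarith))
  have hpos : ∫ t in (0 : ℝ)..(α + π / 2), sign (sin t) = (α + π / 2 - 0) * 1 :=
    intervalIntegral.integral_eq_sub_mul_of_eqOn_Ioo (by linarith) fun t ⟨ht, _⟩ =>
      sign_of_pos (sin_pos_of_pos_of_lt_pi ht (by linarith))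
  have hint : ∀ a b, IntervalIntegrable (fun t => sign (sin t)) volume a b := fun _ _ =>
    ⟨integrable_sign_comp measurable_sin, integrable_sign_comp measurable_sin⟩
  rw [← intervalIntegral.integral_add_adjacent_intervals (hint _ _) (hint _ _), hneg, hpos]
  ring

lemma integral_sign_cos_mul_sign_sin_add {α : ℝ} (hα : |α| ≤ π / 2) :
    ∫ θ in Ioo (-π) π, sign (cos θ) * sign (sin (θ + α)) = 4 * α := by
  set f := fun θ => sign (cos θ) * sign (sin (θ + α))
  have hf : Function.Periodic f π := fun θ => by
    simp only [f, cos_add_pi, add_right_comm θ π, sin_add_pi, Real.sign_neg, neg_mul_neg]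
  have hfi : ∀ a b, IntervalIntegrable f volume a b := fun _ _ =>
    ⟨integrable_sign_mul_sign (by fun_prop) (by fun_prop),
      integrable_sign_mul_sign (by fun_prop) (by fun_prop)⟩
  have hcos : EqOn f (fun θ => sign (sin (θ + α))) (Ioo (-(π / 2)) (π / 2)) := fun θ hθ => by
    simp [f, sign_of_pos (cos_pos_of_mem_Ioo hθ)]
  calc ∫ θ in Ioo (-π) π, f θ
      = ∫ θ in (-π)..(-π + (2 : ℤ) • π), f θ := by
        rw [show -π + (2 : ℤ) • π = π by rw [two_zsmul]; ring,
          intervalIntegral.integral_of_le (by linarith [pi_pos]), integral_Ioc_eq_integral_Ioo]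
    _ = 2 * ∫ θ in (-(π / 2))..(-(π / 2) + π), f θ := by
        rw [hf.intervalIntegral_add_zsmul_eq 2 (-π) hfi, hf.intervalIntegral_add_eq (-π) (-(π / 2))]
        simp
    _ = 2 * ∫ θ in (-(π / 2))..(π / 2), sign (sin (θ + α)) := by
        rw [intervalIntegral.integral_congr_Ioo_of_le (by linarith [pi_pos]) (by
          convert hcos using 2; ring)]
        congr 2; ring
    _ = 4 * α := by
        rw [intervalIntegral.integral_comp_add_right (fun t => sign (sin t)),
          show -(π / 2) + α = α - π / 2 by ring, add_comm (π / 2), integral_sign_sin hα]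
        ring

lemma integral_gaussianReal_prod {E : Type*} [NormedAddCommGroup E] [NormedSpace ℝ E]
    {m₁ m₂ : ℝ} {v₁ v₂ : NNReal} (hv₁ : v₁ ≠ 0) (hv₂ : v₂ ≠ 0) (F : ℝ × ℝ → E) :
    ∫ p, F p ∂(gaussianReal m₁ v₁).prod (gaussianReal m₂ v₂) =
      ∫ p, (gaussianPDFReal m₁ v₁ p.1 * gaussianPDFReal m₂ v₂ p.2) • F p := by
  rw [gaussianReal_of_var_ne_zero _ hv₁, gaussianReal_of_var_ne_zero _ hv₂,
    prod_withDensity (measurable_gaussianPDF _ _) (measurable_gaussianPDF _ _),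
    ← Measure.volume_eq_prod, integral_withDensity_eq_integral_toReal_smul (by fun_prop)
      (ae_of_all _ fun _ => ENNReal.mul_lt_top gaussianPDF_lt_top gaussianPDF_lt_top)]
  simp [gaussianPDF, gaussianPDFReal_nonneg]

lemma gaussianPDFReal_zero_one_mul (x y : ℝ) :
    gaussianPDFReal 0 1 x * gaussianPDFReal 0 1 y = (2 * π)⁻¹ * exp (-(x ^ 2 + y ^ 2) / 2) := by
  have h2π : √(2 * π) * √(2 * π) = 2 * π := mul_self_sqrt (by positivity)
  simp only [gaussianPDFReal, NNReal.coe_one, mul_one, sub_zero]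
  calc (√(2 * π))⁻¹ * exp (-x ^ 2 / 2) * ((√(2 * π))⁻¹ * exp (-y ^ 2 / 2))
      = (√(2 * π) * √(2 * π))⁻¹ * (exp (-x ^ 2 / 2) * exp (-y ^ 2 / 2)) := by ring
    _ = _ := by rw [h2π, ← exp_add]; ring_nf

lemma integral_gaussianReal_prod_eq_radial_mul_angular {E : Type*} [NormedAddCommGroup E]
    [NormedSpace ℝ E] {F : ℝ × ℝ → E} (hF : ∀ r : ℝ, 0 < r → ∀ p, F (r • p) = F p) :
    ∫ p, F p ∂(gaussianReal 0 1).prod (gaussianReal 0 1) =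
      (∫ r in Ioi 0, r * ((2 * π)⁻¹ * exp (-r ^ 2 / 2))) • ∫ θ in Ioo (-π) π, F (cos θ, sin θ) := by
  rw [integral_gaussianReal_prod one_ne_zero one_ne_zero, ← integral_comp_polarCoord_symm,
    polarCoord_target, ← integral_prod_smul, Measure.prod_restrict, ← Measure.volume_eq_prod]
  refine setIntegral_congr_fun (measurableSet_Ioi.prod measurableSet_Ioo) ?_
  rintro ⟨r, θ⟩ ⟨hr, -⟩
  have hFθ : F (r * cos θ, r * sin θ) = F (cos θ, sin θ) := by
    simpa using hF r hr (cos θ, sin θ)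
  simp only [polarCoord_symm_apply, gaussianPDFReal_zero_one_mul, hFθ, smul_smul]
  rw [show (r * cos θ) ^ 2 + (r * sin θ) ^ 2 = r ^ 2 by
    linear_combination r ^ 2 * cos_sq_add_sin_sq θ]

theorem integral_gaussianReal_prod_of_homogeneous {E : Type*} [NormedAddCommGroup E]
    [NormedSpace ℝ E] {F : ℝ × ℝ → E} (hF : ∀ r : ℝ, 0 < r → ∀ p, F (r • p) = F p) :
    ∫ p, F p ∂(gaussianReal 0 1).prod (gaussianReal 0 1) =
      (2 * π)⁻¹ • ∫ θ in Ioo (-π) π, F (cos θ, sin θ) := by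
  -- The radial factor is read off from the case `F = 1`, where both sides are total masses.
  have hradial : ∫ r in Ioi 0, r * ((2 * π)⁻¹ * exp (-r ^ 2 / 2)) = (2 * π)⁻¹ := by
    have h := integral_gaussianReal_prod_eq_radial_mul_angular (F := fun _ => (1 : ℝ))
      fun _ _ _ => rfl
    simp only [integral_const, smul_eq_mul, mul_one, probReal_univ,
      measureReal_restrict_apply_univ, volume_real_Ioo_of_le (by linarith [pi_pos] : -π ≤ π)] at h
    exact eq_inv_of_mul_eq_one_left (by linear_combination -h)
  rw [integral_gaussianReal_prod_eq_radial_mul_angular hF, hradial]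

lemma integral_sign_mul_sign_gaussianReal_prod {ρ : ℝ} (hρ₁ : -1 ≤ ρ) (hρ₂ : ρ ≤ 1) :
    ∫ p, sign p.1 * sign (ρ * p.1 + √(1 - ρ ^ 2) * p.2)
      ∂(gaussianReal 0 1).prod (gaussianReal 0 1) = 2 / π * arcsin ρ := by
  have hα : |arcsin ρ| ≤ π / 2 := abs_le.mpr ⟨neg_pi_div_two_le_arcsin ρ, arcsin_le_pi_div_two ρ⟩
  have hangle : ∀ θ, ρ * cos θ + √(1 - ρ ^ 2) * sin θ = sin (θ + arcsin ρ) := fun θ => by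
    rw [sin_add, sin_arcsin hρ₁ hρ₂, cos_arcsin]
    ring
  rw [integral_gaussianReal_prod_of_homogeneous fun r hr p => by
    simp only [Prod.smul_fst, Prod.smul_snd, smul_eq_mul, mul_left_comm _ r, ← mul_add,
      sign_mul_of_pos hr]]
  simp only [hangle, smul_eq_mul, integral_sign_cos_mul_sign_sin_add hα]
  field_simp
  ring

section Probability

variable {Ω : Type*} [MeasurableSpace Ω] {μ : Measure Ω}

lemma integral_sign_mul_sign_of_indepFun [IsProbabilityMeasure μ] {X W : Ω → ℝ}
    (hX : Measurable X) (hW : Measurable W) (hXW : IndepFun X W μ)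
    (hXlaw : μ.map X = gaussianReal 0 1) {ρ : ℝ} {v : NNReal}
    (hWlaw : μ.map W = gaussianReal 0 v) (hv : ρ ^ 2 + v = 1) :
    ∫ ω, sign (X ω) * sign (ρ * X ω + W ω) ∂μ = 2 / π * arcsin ρ := by
  have hσ : (v : ℝ) = 1 - ρ ^ 2 := by linarith
  have hlaw : μ.map (fun ω => (X ω, W ω)) =
      ((gaussianReal 0 1).prod (gaussianReal 0 1)).map (Prod.map id (√(1 - ρ ^ 2) * ·)) := by
    rw [(indepFun_iff_map_prod_eq_prod_map_map hX.aemeasurable hW.aemeasurable).mp hXW, hXlaw,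
      hWlaw, ← Measure.map_prod_map _ _ measurable_id (measurable_const_mul _), Measure.map_id,
      gaussianReal_map_const_mul]
    congr
    · simp
    · ext; simp [← hσ]
  have hρ : ρ ^ 2 ≤ 1 := by linarith [v.2]
  calc ∫ ω, sign (X ω) * sign (ρ * X ω + W ω) ∂μ
      = ∫ p, sign p.1 * sign (ρ * p.1 + p.2) ∂μ.map (fun ω => (X ω, W ω)) := by
        rw [integral_map (hX.prodMk hW).aemeasurable (by fun_prop)]
    _ = ∫ p, sign p.1 * sign (ρ * p.1 + √(1 - ρ ^ 2) * p.2)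
          ∂(gaussianReal 0 1).prod (gaussianReal 0 1) := by
        rw [hlaw, integral_map (by fun_prop) (by fun_prop)]
        rfl
    _ = 2 / π * arcsin ρ :=
        integral_sign_mul_sign_gaussianReal_prod (by nlinarith) (by nlinarith)

lemma integral_sign_mul_sign_of_iIndepFun {ι : Type*} [IsProbabilityMeasure μ]
    {G : ι → Ω → ℝ} (hmeas : ∀ i, Measurable (G i)) (hindep : iIndepFun G μ)
    (hgauss : ∀ i, μ.map (G i) = gaussianReal 0 1) {i j k : ι}
    (hij : i ≠ j) (hik : i ≠ k) (hjk : j ≠ k) {ρ a b : ℝ} (h : ρ ^ 2 + a ^ 2 + b ^ 2 = 1) :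
    ∫ ω, sign (G i ω) * sign (ρ * G i ω + a * G j ω + b * G k ω) ∂μ = 2 / π * arcsin ρ := by
  have hlaw : ∀ (c : ℝ) (l : ι),
      μ.map (fun ω => c * G l ω) = gaussianReal 0 (.mk (c ^ 2) (sq_nonneg c)) :=
    fun c l => by simpa using (gaussianReal_const_mul ⟨(hmeas l).aemeasurable, hgauss l⟩ c).map_eq
  have hWlaw : μ.map (fun ω => a * G j ω + b * G k ω) =
      gaussianReal 0 (.mk (a ^ 2) (sq_nonneg a) + .mk (b ^ 2) (sq_nonneg b)) := by
    have := gaussianReal_add_gaussianReal_of_indepFun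
      ((hindep.indepFun hjk).comp (measurable_const_mul a) (measurable_const_mul b))
      (hlaw a j) (hlaw b k)
    rwa [zero_add] at this
  have hXW : IndepFun (G i) (fun ω => a * G j ω + b * G k ω) μ :=
    (hindep.indepFun_prodMk hmeas j k i hij.symm hik.symm).symm.comp measurable_id
      (by fun_prop : Measurable fun p : ℝ × ℝ => a * p.1 + b * p.2)
  simp_rw [add_assoc]
  exact integral_sign_mul_sign_of_indepFun (hmeas i) (by fun_prop) hXW (hgauss i) hWlaw
    (by simp only [NNReal.coe_add, NNReal.coe_mk]; linarith)

lemma integral_sign_add_I_mul_sign_mul_sign_sub_I_mul_sign [IsFiniteMeasure μ]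
    {U₁ U₂ V₁ V₂ : Ω → ℝ} (hU₁ : Measurable U₁) (hU₂ : Measurable U₂) (hV₁ : Measurable V₁)
    (hV₂ : Measurable V₂) :
    ∫ ω, ((sign (U₁ ω) : ℂ) + Complex.I * (sign (U₂ ω) : ℂ)) *
        ((sign (V₁ ω) : ℂ) - Complex.I * (sign (V₂ ω) : ℂ)) ∂μ =
      ((∫ ω, sign (U₁ ω) * sign (V₁ ω) ∂μ) + ∫ ω, sign (U₂ ω) * sign (V₂ ω) ∂μ : ℝ) +
        Complex.I *
          ((∫ ω, sign (U₂ ω) * sign (V₁ ω) ∂μ) - ∫ ω, sign (U₁ ω) * sign (V₂ ω) ∂μ : ℝ) := by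
  have hpoint : ∀ ω, ((sign (U₁ ω) : ℂ) + Complex.I * (sign (U₂ ω) : ℂ)) *
      ((sign (V₁ ω) : ℂ) - Complex.I * (sign (V₂ ω) : ℂ)) =
      ((sign (U₁ ω) * sign (V₁ ω) + sign (U₂ ω) * sign (V₂ ω) : ℝ) : ℂ) +
        Complex.I * ((sign (U₂ ω) * sign (V₁ ω) - sign (U₁ ω) * sign (V₂ ω) : ℝ) : ℂ) :=
    fun ω => by
      push_cast
      linear_combination -(sign (U₂ ω) * sign (V₂ ω) : ℂ) * Complex.I_sq
  have h₁₁ := integrable_sign_mul_sign (μ := μ) hU₁ hV₁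
  have h₂₂ := integrable_sign_mul_sign (μ := μ) hU₂ hV₂
  have h₂₁ := integrable_sign_mul_sign (μ := μ) hU₂ hV₁
  have h₁₂ := integrable_sign_mul_sign (μ := μ) hU₁ hV₂
  simp_rw [hpoint]
  rw [integral_add, integral_const_mul, integral_complex_ofReal, integral_complex_ofReal,
    integral_add h₁₁ h₂₂, integral_sub h₂₁ h₁₂]
  · exact (h₁₁.add h₂₂).ofReal
  · exact (h₂₁.sub h₁₂).ofReal.const_mul Complex.I

end Probability

/-- **Complex arcsine law.**
Let `G1, G2, G3, G4` be i.i.d. real standard normal random variables, let `r s : ℝ` with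
`r² + s² ≤ 1`, and set `U1 = G1`, `U2 = G2`,
`V1 = r G1 + s G2 + √(1 − r² − s²) G3`, `V2 = −s G1 + r G2 + √(1 − r² − s²) G4`.  Then
`E[(sgn U1 + j sgn U2)(sgn V1 − j sgn V2)] = (4/π)(arcsin r + j arcsin s)`. -/
theorem complex_arcsine_law
    {Ω : Type*} [MeasurableSpace Ω] (μ : Measure Ω) [IsProbabilityMeasure μ]
    (G : Fin 4 → Ω → ℝ) (hmeas : ∀ i, Measurable (G i))
    (hindep : iIndepFun G μ)
    (hgauss : ∀ i, Measure.map (G i) μ = gaussianReal 0 1)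
    (r s : ℝ) (hrs : r ^ 2 + s ^ 2 ≤ 1) :
    ∫ ω,
        (((Real.sign (G 0 ω) : ℝ) : ℂ) + Complex.I * ((Real.sign (G 1 ω) : ℝ) : ℂ)) *
          (((Real.sign (r * G 0 ω + s * G 1 ω +
                Real.sqrt (1 - r ^ 2 - s ^ 2) * G 2 ω) : ℝ) : ℂ) -
            Complex.I * ((Real.sign (-s * G 0 ω + r * G 1 ω +
                Real.sqrt (1 - r ^ 2 - s ^ 2) * G 3 ω) : ℝ) : ℂ)) ∂μ =
      ((4 / Real.pi : ℝ) : ℂ) *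
        (((Real.arcsin r : ℝ) : ℂ) + Complex.I * ((Real.arcsin s : ℝ) : ℂ)) := by
  set c := √(1 - r ^ 2 - s ^ 2)
  have hc : c ^ 2 = 1 - r ^ 2 - s ^ 2 := sq_sqrt (by linarith)
  have law (i j k : Fin 4) (hij : i ≠ j) (hik : i ≠ k) (hjk : j ≠ k) (ρ a : ℝ)
      (h : ρ ^ 2 + a ^ 2 + c ^ 2 = 1) :=
    integral_sign_mul_sign_of_iIndepFun hmeas hindep hgauss hij hik hjk h
  have h₀₁₂ := law 0 1 2 (by decide) (by decide) (by decide) r s (by linarith)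
  have h₁₀₃ := law 1 0 3 (by decide) (by decide) (by decide) r (-s) (by linarith)
  have h₁₀₂ := law 1 0 2 (by decide) (by decide) (by decide) s r (by linarith)
  have h₀₁₃ := law 0 1 3 (by decide) (by decide) (by decide) (-s) r (by linarith)
  simp only [add_comm (r * G 1 _) (-s * G 0 _), add_comm (s * G 1 _) (r * G 0 _)] at h₁₀₃ h₁₀₂
  rw [integral_sign_add_I_mul_sign_mul_sign_sub_I_mul_sign (hmeas 0) (hmeas 1) (by fun_prop)
    (by fun_prop), h₀₁₂, h₁₀₃, h₁₀₂, h₀₁₃, arcsin_neg]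
  push_cast
  ring
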